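/- Let R(t), R̄(t) ∈ SO(3) satisfy Ṙ = RΩ̂ and (d/dt)R̄ = R̄(Ω + γ̃ + k_R e)^ for some curves Ω, γ̃, e : ℝ → ℝ³ and constant k_R. Fix a unit vector u ∈ ℝ³ and set b = Rᵀu, b̄ = R̄ᵀu, Ψ_N = 1 - ⟨b̄, b⟩. Then dΨ_N/dt = ⟨γ̃ + k_R e, b̄ × b⟩. -/

import Mathlib

/-!
From `Ṙ = R Ω̂` and `Ω̂ᵀ = -Ω̂` one gets `ḃ = -Ω × b` for `b = Rᵀu`, and likewise
`(b̄)˙ = -(Ω + δ) × b̄` with `δ = γ̃ + k_R e`. The common angular velocity `Ω` rotates `b` and `b̄`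
together, so it does not change `b̄ ⬝ b`; only `δ` contributes, through the triple product
`-(δ × b̄) ⬝ b = -δ ⬝ (b̄ × b)`.
-/

open Matrix

noncomputable section

def hat (x : Fin 3 → ℝ) : Matrix (Fin 3) (Fin 3) ℝ :=
  !![0, -x 2, x 1; x 2, 0, -x 0; -x 1, x 0, 0]

def vee (M : Matrix (Fin 3) (Fin 3) ℝ) : Fin 3 → ℝ :=
  ![M 2 1, M 0 2, M 1 0]

def SO3 (R : Matrix (Fin 3) (Fin 3) ℝ) : Prop :=
  Rᵀ * R = 1 ∧ R.det = 1

attribute [local instance] Matrix.linftyOpNormedAddCommGroup Matrix.linftyOpNormedSpace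

theorem hat_mulVec (x y : Fin 3 → ℝ) : hat x *ᵥ y = x ⨯₃ y := by
  ext i
  fin_cases i <;>
    simp only [hat, cross_apply, mulVec, dotProduct, Fin.sum_univ_three, of_apply, cons_val',
      cons_val_fin_one, cons_val, cons_val_zero, cons_val_one, Fin.isValue, Fin.zero_eta,
      Fin.mk_one, Fin.reduceFinMk] <;>
    ring

theorem hat_transpose (x : Fin 3 → ℝ) : (hat x)ᵀ = -hat x := by
  ext i j
  fin_cases i <;> fin_cases j <;> simp [hat]

theorem add_cross_dotProduct_add_dotProduct_cross {R : Type*} [CommRing R]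
    (ω δ a b : Fin 3 → R) : (ω + δ) ⨯₃ a ⬝ᵥ b + a ⬝ᵥ ω ⨯₃ b = δ ⬝ᵥ a ⨯₃ b := by
  simp only [cross_apply, dotProduct, Fin.sum_univ_three, Pi.add_apply, cons_val_zero,
    cons_val_one, cons_val_two, head_cons, tail_cons]
  ring

theorem hasDerivAt_dotProduct {𝕜 ι : Type*} [NontriviallyNormedField 𝕜] [Fintype ι]
    {f g : 𝕜 → ι → 𝕜} {f' g' : ι → 𝕜} {t : 𝕜}
    (hf : HasDerivAt f f' t) (hg : HasDerivAt g g' t) :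
    HasDerivAt (fun s => f s ⬝ᵥ g s) (f' ⬝ᵥ g t + f t ⬝ᵥ g') t := by
  rw [hasDerivAt_pi] at hf hg
  simpa only [dotProduct, ← Finset.sum_add_distrib] using
    HasDerivAt.fun_sum fun i _ => (hf i).fun_mul (hg i)

theorem hasDerivAt_transpose_mulVec {𝕜 m n : Type*} [NontriviallyNormedField 𝕜]
    [CompleteSpace 𝕜] [Fintype m] [Fintype n] {A : 𝕜 → Matrix m n 𝕜} {A' : Matrix m n 𝕜}
    {t : 𝕜} (h : HasDerivAt A A' t) (u : m → 𝕜) :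
    HasDerivAt (fun s => (A s)ᵀ *ᵥ u) (A'ᵀ *ᵥ u) t := by
  simp only [mulVec_transpose]
  exact (vecMulBilin 𝕜 𝕜 u).toContinuousLinearMap.hasFDerivAt.comp_hasDerivAt t h

theorem hasDerivAt_transpose_mulVec_of_hat {R : ℝ → Matrix (Fin 3) (Fin 3) ℝ}
    {ω : Fin 3 → ℝ} {t : ℝ} (h : HasDerivAt R (R t * hat ω) t) (u : Fin 3 → ℝ) :
    HasDerivAt (fun s => (R s)ᵀ *ᵥ u) (-(ω ⨯₃ ((R t)ᵀ *ᵥ u))) t := by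
  convert hasDerivAt_transpose_mulVec h u using 1
  rw [transpose_mul, ← mulVec_mulVec, hat_transpose, neg_mulVec, hat_mulVec]

theorem deriv_PsiN_general (R Rbar : ℝ → Matrix (Fin 3) (Fin 3) ℝ)
    (Ω γtil e : ℝ → Fin 3 → ℝ) (kR : ℝ) (u : Fin 3 → ℝ)
    (hRdyn : ∀ t, HasDerivAt R (R t * hat (Ω t)) t)
    (hRbardyn : ∀ t, HasDerivAt Rbar (Rbar t * hat (Ω t + γtil t + kR • e t)) t)
    (t : ℝ) :
    HasDerivAt (fun s => 1 - ((Rbar s)ᵀ.mulVec u) ⬝ᵥ ((R s)ᵀ.mulVec u))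
      ((γtil t + kR • e t) ⬝ᵥ
        crossProduct ((Rbar t)ᵀ.mulVec u) ((R t)ᵀ.mulVec u)) t := by
  have hb := hasDerivAt_transpose_mulVec_of_hat (hRdyn t) u
  have hbbar := hasDerivAt_transpose_mulVec_of_hat (hRbardyn t) u
  refine ((hasDerivAt_dotProduct hbbar hb).const_sub 1).congr_deriv ?_
  rw [neg_dotProduct, dotProduct_neg, ← neg_add, neg_neg, add_assoc,
    add_cross_dotProduct_add_dotProduct_cross]

theorem deriv_PsiN (R Rbar : ℝ → Matrix (Fin 3) (Fin 3) ℝ)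
    (Ω γtil e : ℝ → Fin 3 → ℝ) (kR : ℝ) (u : Fin 3 → ℝ) (hu : u ⬝ᵥ u = 1)
    (hRdyn : ∀ t, HasDerivAt R (R t * hat (Ω t)) t)
    (hRbardyn : ∀ t, HasDerivAt Rbar (Rbar t * hat (Ω t + γtil t + kR • e t)) t)
    (hR : ∀ t, SO3 (R t)) (hRbar : ∀ t, SO3 (Rbar t)) (t : ℝ) :
    HasDerivAt (fun s => 1 - ((Rbar s)ᵀ.mulVec u) ⬝ᵥ ((R s)ᵀ.mulVec u))
      ((γtil t + kR • e t) ⬝ᵥ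
        crossProduct ((Rbar t)ᵀ.mulVec u) ((R t)ᵀ.mulVec u)) t :=
  deriv_PsiN_general R Rbar Ω γtil e kR u hRdyn hRbardyn t
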